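/- arXiv:2001.03500 — 3 statements merged into one kernel-verified Lean document; each statement's English description precedes it below -/
import Mathlib

section
/- Let n ≥ 3 and let f be a minimum-weight total 3-rainbow dominating function on P₃ □ P_n that minimizes the number of vertices assigned ∅. Then |f((2,j))| ∈ {0,1} for all j ∈ {0,…,n−1}, and |f((i,0))| = |f((0,j))| = 1 for all i ∈ {0,1,2} and j ∈ {1,…,n−1}. -/
/-! Relabelling a vertex `v` that carries `b ≥ 2` colours, together with its `s` empty
out-neighbours, by single colours gives another total rainbow dominating function, of weight
`w - b + 1 + s` and with `s` fewer empty vertices. Hence a function of minimum weight, and then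
with fewest empty vertices, has `b ≤ s` at every vertex with `b ≥ 2`. In `P₃ □ P_n` every vertex
has at most two out-neighbours, and `(2, j)` and `(i, n - 1)` at most one. The vertices
`(0, j + 1)` and `(2, 0)` have a unique in-neighbour, which carries all three colours if they are
empty; with `b ≤ s ≤ 2` this forces at most one colour on `(0, j)` and `(1, 0)`. The same unique
in-neighbours, now carrying at most one colour, show that no vertex `(0, j)` or `(i, 0)` is
empty. -/

open Finset

/-- No isolated vertex: every vertex has an in-neighbor or an out-neighbor. -/
def NoIsolated {V : Type*} (Adj : V → V → Prop) : Prop :=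
  ∀ v, ∃ u, Adj u v ∨ Adj v u

/-- A `k`-rainbow dominating function on a digraph. -/
def IsKRDF {V : Type*} (k : ℕ) (Adj : V → V → Prop) (f : V → Finset (Fin k)) : Prop :=
  ∀ v, f v = ∅ → ∀ c : Fin k, ∃ u, Adj u v ∧ c ∈ f u

/-- A total `k`-rainbow dominating function on a digraph. -/
def IsTkRDF {V : Type*} (k : ℕ) (Adj : V → V → Prop) (f : V → Finset (Fin k)) : Prop :=
  IsKRDF k Adj f ∧
    ∀ v, f v ≠ ∅ → ∃ u, u ≠ v ∧ f u ≠ ∅ ∧ (Adj u v ∨ Adj v u)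

/-- The `k`-rainbow domination number. -/
noncomputable def krdNum {V : Type*} [Fintype V] (k : ℕ) (Adj : V → V → Prop) : ℕ :=
  sInf {w | ∃ f : V → Finset (Fin k), IsKRDF k Adj f ∧ ∑ v, (f v).card = w}

/-- The total `k`-rainbow domination number. -/
noncomputable def tkRainbow {V : Type*} [Fintype V] (k : ℕ) (Adj : V → V → Prop) : ℕ :=
  sInf {w | ∃ f : V → Finset (Fin k), IsTkRDF k Adj f ∧ ∑ v, (f v).card = w}

/-- A dominating set of a digraph. -/
def IsDomSet {V : Type*} (Adj : V → V → Prop) (S : Finset V) : Prop :=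
  ∀ v, v ∉ S → ∃ u ∈ S, Adj u v

/-- The domination number. -/
noncomputable def domNum {V : Type*} [Fintype V] (Adj : V → V → Prop) : ℕ :=
  sInf {m | ∃ S : Finset V, IsDomSet Adj S ∧ S.card = m}

/-- A total dominating set of a digraph. -/
def IsTDSet {V : Type*} (Adj : V → V → Prop) (S : Finset V) : Prop :=
  IsDomSet Adj S ∧ ∀ v ∈ S, ∃ u ∈ S, u ≠ v ∧ (Adj u v ∨ Adj v u)

/-- The total domination number. -/
noncomputable def totalDomNum {V : Type*} [Fintype V] (Adj : V → V → Prop) : ℕ :=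
  sInf {m | ∃ S : Finset V, IsTDSet Adj S ∧ S.card = m}

/-- The underlying (undirected) simple graph of a digraph. -/
def underlying {V : Type*} (Adj : V → V → Prop) : SimpleGraph V where
  Adj u v := u ≠ v ∧ (Adj u v ∨ Adj v u)
  symm := ⟨fun u v ⟨h1, h2⟩ => ⟨h1.symm, h2.symm⟩⟩
  loopless := ⟨fun v h => h.1 rfl⟩

/-- Maximum out-degree. -/
noncomputable def maxOutDeg {V : Type*} [Fintype V] (Adj : V → V → Prop) : ℕ :=
  Finset.univ.sup fun v => Nat.card {u | Adj v u}

/-- Maximum in-degree. -/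
noncomputable def maxInDeg {V : Type*} [Fintype V] (Adj : V → V → Prop) : ℕ :=
  Finset.univ.sup fun v => Nat.card {u | Adj u v}

/-- The Cartesian product `P_m □ P_n` of two directed paths. -/
def pathProdAdj (m n : ℕ) : Fin m × Fin n → Fin m × Fin n → Prop :=
  fun p q => (p.1 = q.1 ∧ (p.2 : ℕ) + 1 = (q.2 : ℕ)) ∨
    (p.2 = q.2 ∧ (p.1 : ℕ) + 1 = (q.1 : ℕ))


section RainbowDomination

variable {V : Type*} {k : ℕ} {Adj : V → V → Prop} {f : V → Finset (Fin k)}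

lemma IsKRDF.eq_univ_of_forall_adj_eq (hf : IsKRDF k Adj f) {x v : V} (hx : f x = ∅)
    (hv : ∀ u, Adj u x → u = v) : f v = univ :=
  eq_univ_iff_forall.2 fun c => by
    obtain ⟨u, hu, hc⟩ := hf x hx c
    rwa [hv u hu] at hc

lemma IsKRDF.ne_empty_of_forall_adj_eq (hf : IsKRDF k Adj f) (hk : 2 ≤ k) {x v : V}
    (hv : #(f v) ≤ 1) (hx : ∀ u, Adj u x → u = v) : f x ≠ ∅ := fun h => by
  rw [hf.eq_univ_of_forall_adj_eq h hx, card_univ, Fintype.card_fin] at hv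
  omega

variable [Fintype V]

def weight (f : V → Finset (Fin k)) : ℕ := ∑ v, #(f v)

def emptyVertices (f : V → Finset (Fin k)) : Finset V := univ.filter fun v => f v = ∅

def IsLexMinTkRDF (k : ℕ) (Adj : V → V → Prop) (f : V → Finset (Fin k)) : Prop :=
  IsTkRDF k Adj f ∧ (∀ g, IsTkRDF k Adj g → weight f ≤ weight g) ∧
    ∀ g, IsTkRDF k Adj g → weight g = weight f → #(emptyVertices f) ≤ #(emptyVertices g)

def outNeighborFinset (Adj : V → V → Prop) [DecidableRel Adj] (v : V) : Finset V :=
  univ.filter (Adj v)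

def emptyOutNeighborFinset (Adj : V → V → Prop) [DecidableRel Adj] (f : V → Finset (Fin k))
    (v : V) : Finset V :=
  (outNeighborFinset Adj v).filter (f · = ∅)

variable [DecidableEq V] [DecidableRel Adj]

lemma IsTkRDF.exists_fill_emptyOutNeighborFinset (hf : IsTkRDF k Adj f) {v : V}
    (hv : f v ≠ ∅) :
    ∃ g, IsTkRDF k Adj g ∧
      weight g + #(f v) = weight f + 1 + #(emptyOutNeighborFinset Adj f v) ∧
      #(emptyVertices g) + #(emptyOutNeighborFinset Adj f v) = #(emptyVertices f) := by
  obtain ⟨c, -⟩ := nonempty_iff_ne_empty.2 hv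
  set S := emptyOutNeighborFinset Adj f v
  have hmemS : ∀ x, x ∈ S ↔ Adj v x ∧ f x = ∅ := by
    simp [S, emptyOutNeighborFinset, outNeighborFinset]
  have hvS : v ∉ S := fun h => hv ((hmemS v).1 h).2
  set T := insert v S
  set g : V → Finset (Fin k) := fun x => if x ∈ T then {c} else f x
  have hg_of_notMem : ∀ x ∉ T, g x = f x := fun x hx => if_neg hx
  have hg_ne : ∀ x, f x ≠ ∅ → g x ≠ ∅ := fun x hx => by
    simp only [g]; split_ifs <;> simp [hx]
  refine ⟨g, ⟨fun x hgx c' => ?_, fun x hgx => ?_⟩, ?_, ?_⟩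
  · have hxT : x ∉ T := fun h => by simp [g, h] at hgx
    have hfx : f x = ∅ := hg_of_notMem x hxT ▸ hgx
    obtain ⟨u, hux, hc'⟩ := hf.1 x hfx c'
    have huT : u ∉ T := fun huT => by
      rcases mem_insert.1 huT with rfl | huS
      · exact hxT (mem_insert_of_mem ((hmemS x).2 ⟨hux, hfx⟩))
      · simp [((hmemS u).1 huS).2] at hc'
    exact ⟨u, hux, hg_of_notMem u huT ▸ hc'⟩
  · by_cases hfx : f x = ∅
    · have hxS : x ∈ S := by
        have hxT : x ∈ T := by_contra fun h => hgx (hg_of_notMem x h ▸ hfx)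
        rcases mem_insert.1 hxT with rfl | h
        · exact absurd hfx hv
        · exact h
      exact ⟨v, fun h => hv (h ▸ hfx), hg_ne v hv, Or.inl ((hmemS x).1 hxS).1⟩
    · obtain ⟨u, hux, hu, hadj⟩ := hf.2 x hfx
      exact ⟨u, hux, hg_ne u hu, hadj⟩
  · have hgT : ∑ x ∈ T, #(g x) = #S + 1 := by
      rw [sum_const_nat (m := 1) fun x hx => by simp [g, hx], card_insert_of_notMem hvS, mul_one]
    have hfT : ∑ x ∈ T, #(f x) = #(f v) := by
      rw [sum_insert hvS, sum_eq_zero fun x hx => by simp [((hmemS x).1 hx).2], add_zero]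
    have hcompl : ∑ x ∈ Tᶜ, #(g x) = ∑ x ∈ Tᶜ, #(f x) :=
      sum_congr rfl fun x hx => by rw [hg_of_notMem x (mem_compl.1 hx)]
    simp only [weight, ← sum_add_sum_compl T]
    omega
  · have hSsub : S ⊆ emptyVertices f := fun x hx => by
      simp [emptyVertices, ((hmemS x).1 hx).2]
    have hempty : emptyVertices g = emptyVertices f \ S := by
      ext x
      by_cases hxT : x ∈ T
      · have hxv : x = v ∨ x ∈ S := mem_insert.1 hxT
        simp only [emptyVertices, mem_sdiff, mem_filter, mem_univ, true_and, g, if_pos hxT]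
        refine ⟨fun h => absurd h (singleton_ne_empty c), fun ⟨hfx, hxS⟩ => ?_⟩
        rcases hxv with rfl | h
        · exact absurd hfx hv
        · exact absurd h hxS
      · have hxS : x ∉ S := fun h => hxT (mem_insert_of_mem h)
        simp [emptyVertices, hg_of_notMem x hxT, hxS]
    rw [hempty, card_sdiff_of_subset hSsub]
    have := card_le_card hSsub
    omega

namespace IsLexMinTkRDF

variable (hf : IsLexMinTkRDF k Adj f)
include hf

lemma card_le_card_emptyOutNeighborFinset {v : V} (hv : 2 ≤ #(f v)) :
    #(f v) ≤ #(emptyOutNeighborFinset Adj f v) := by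
  obtain ⟨g, hg, hweight, hempty⟩ :=
    hf.1.exists_fill_emptyOutNeighborFinset (v := v) fun h => by simp [h] at hv
  by_contra! hlt
  have hwf := hf.2.1 g hg
  have := hf.2.2 g hg (by omega)
  omega

lemma card_le_one_of_card_outNeighborFinset_le_one {v : V}
    (hv : #(outNeighborFinset Adj v) ≤ 1) : #(f v) ≤ 1 := by
  by_contra! h
  have := hf.card_le_card_emptyOutNeighborFinset h
  have : #(emptyOutNeighborFinset Adj f v) ≤ #(outNeighborFinset Adj v) := card_filter_le _ _
  omega

lemma card_le_one_of_forall_adj_eq (hk : 3 ≤ k) {v w : V}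
    (hv : #(outNeighborFinset Adj v) ≤ 2) (hvw : Adj v w) (hw : ∀ u, Adj u w → u = v) :
    #(f v) ≤ 1 := by
  by_contra! h
  have hS := hf.card_le_card_emptyOutNeighborFinset h
  by_cases hfw : f w = ∅
  · have : #(emptyOutNeighborFinset Adj f v) ≤ #(outNeighborFinset Adj v) := card_filter_le _ _
    rw [hf.1.1.eq_univ_of_forall_adj_eq hfw hw, card_univ, Fintype.card_fin] at hS
    omega
  · have hsub : emptyOutNeighborFinset Adj f v ⊂ outNeighborFinset Adj v :=
      filter_ssubset.2 ⟨w, mem_filter.2 ⟨mem_univ w, hvw⟩, hfw⟩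
    have := card_lt_card hsub
    omega

end IsLexMinTkRDF

end RainbowDomination

section PathProduct

variable {m n : ℕ}

instance : DecidableRel (pathProdAdj m n) := fun _ _ => inferInstanceAs (Decidable (_ ∨ _))

lemma pathProdAdj.eq_of_fst_eq {p q q' : Fin m × Fin n} (h : pathProdAdj m n p q)
    (h' : pathProdAdj m n p q') (h1 : q.1 = q'.1) : q = q' := by
  rcases h with ⟨_, _⟩ | ⟨_, _⟩ <;> rcases h' with ⟨_, _⟩ | ⟨_, _⟩ <;> ext <;> omega

lemma pathProdAdj.eq_of_fst_eq_zero_or_snd_eq_zero {q v : Fin m × Fin n}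
    (hq : (q.1 : ℕ) = 0 ∨ (q.2 : ℕ) = 0) (hv : pathProdAdj m n v q) :
    ∀ u, pathProdAdj m n u q → u = v := by
  intro u hu
  rcases hu with ⟨_, _⟩ | ⟨_, _⟩ <;> rcases hv with ⟨_, _⟩ | ⟨_, _⟩ <;>
    ext <;> omega

lemma card_outNeighborFinset_pathProdAdj_le (p : Fin m × Fin n) (s : Finset ℕ)
    (hs : ∀ q, pathProdAdj m n p q → (q.1 : ℕ) ∈ s) :
    #(outNeighborFinset (pathProdAdj m n) p) ≤ #s := by
  refine card_le_card_of_injOn (fun q => (q.1 : ℕ)) (fun q hq => hs q ?_)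
    fun q hq q' hq' h => ?_
  · simpa [outNeighborFinset] using hq
  · exact pathProdAdj.eq_of_fst_eq (by simpa [outNeighborFinset] using hq)
      (by simpa [outNeighborFinset] using hq') (Fin.ext h)

lemma card_outNeighborFinset_pathProdAdj_le_two (p : Fin m × Fin n) :
    #(outNeighborFinset (pathProdAdj m n) p) ≤ 2 :=
  (card_outNeighborFinset_pathProdAdj_le p {(p.1 : ℕ), (p.1 : ℕ) + 1} fun q hq => by
    rcases hq with ⟨h, -⟩ | ⟨-, h⟩ <;> simp [← h]).trans (card_le_two)

lemma card_outNeighborFinset_pathProdAdj_le_one_of_fst {p : Fin m × Fin n}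
    (hp : (p.1 : ℕ) + 1 = m) : #(outNeighborFinset (pathProdAdj m n) p) ≤ 1 :=
  card_outNeighborFinset_pathProdAdj_le p {(p.1 : ℕ)} fun q hq => by
    rcases hq with ⟨h, -⟩ | ⟨-, h⟩
    · simp [h]
    · omega

lemma card_outNeighborFinset_pathProdAdj_le_one_of_snd {p : Fin m × Fin n}
    (hp : (p.2 : ℕ) + 1 = n) : #(outNeighborFinset (pathProdAdj m n) p) ≤ 1 :=
  card_outNeighborFinset_pathProdAdj_le p {(p.1 : ℕ) + 1} fun q hq => by
    rcases hq with ⟨-, h⟩ | ⟨-, h⟩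
    · omega
    · simp [h]

end PathProduct

theorem tr3_P3_Pn_structure (n : ℕ) (hn : 3 ≤ n)
    (f : Fin 3 × Fin n → Finset (Fin 3))
    (hf : IsTkRDF 3 (pathProdAdj 3 n) f)
    (hw : ∀ g : Fin 3 × Fin n → Finset (Fin 3), IsTkRDF 3 (pathProdAdj 3 n) g →
      ∑ v, (f v).card ≤ ∑ v, (g v).card)
    (he : ∀ g : Fin 3 × Fin n → Finset (Fin 3), IsTkRDF 3 (pathProdAdj 3 n) g →
      ∑ v, (g v).card = ∑ v, (f v).card →
      (Finset.univ.filter fun v => f v = ∅).card ≤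
        (Finset.univ.filter fun v => g v = ∅).card) :
    (∀ j : Fin n, (f (2, j)).card ≤ 1) ∧
    (∀ i : Fin 3, (f (i, ⟨0, by omega⟩)).card = 1) ∧
    (∀ j : Fin n, 1 ≤ (j : ℕ) → (f (0, j)).card = 1) := by
  have hmin : IsLexMinTkRDF 3 (pathProdAdj 3 n) f := ⟨hf, hw, he⟩
  have hpred := @pathProdAdj.eq_of_fst_eq_zero_or_snd_eq_zero 3 n
  have hrow2 : ∀ j : Fin n, #(f (2, j)) ≤ 1 := fun j =>
    hmin.card_le_one_of_card_outNeighborFinset_le_one <|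
      card_outNeighborFinset_pathProdAdj_le_one_of_fst rfl
  have hrow0 : ∀ j : Fin n, #(f (0, j)) ≤ 1 := by
    intro j
    by_cases hj : (j : ℕ) + 1 < n
    · exact hmin.card_le_one_of_forall_adj_eq le_rfl
        (card_outNeighborFinset_pathProdAdj_le_two _) (w := (0, ⟨j + 1, hj⟩))
        (Or.inl ⟨rfl, rfl⟩) (hpred (Or.inl rfl) (Or.inl ⟨rfl, rfl⟩))
    · exact hmin.card_le_one_of_card_outNeighborFinset_le_one <|
        card_outNeighborFinset_pathProdAdj_le_one_of_snd (by dsimp only; omega)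
  have h10 : #(f (1, ⟨0, by omega⟩)) ≤ 1 :=
    hmin.card_le_one_of_forall_adj_eq le_rfl
      (card_outNeighborFinset_pathProdAdj_le_two _) (w := (2, ⟨0, by omega⟩))
      (Or.inr ⟨rfl, rfl⟩) (hpred (Or.inr rfl) (Or.inr ⟨rfl, rfl⟩))
  have hone : ∀ {x} v, #(f v) ≤ 1 → (∀ u, pathProdAdj 3 n u x → u = v) → #(f x) ≤ 1 →
      #(f x) = 1 := fun v hv hx hle =>
    le_antisymm hle <| card_pos.2 <| nonempty_iff_ne_empty.2 <|
      hf.1.ne_empty_of_forall_adj_eq (by norm_num) hv hx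
  refine ⟨hrow2, fun i => ?_, fun j hj => ?_⟩
  · fin_cases i
    · exact hone (0, ⟨0, by omega⟩) (hrow0 _)
        (fun u hu => by rcases hu with h | h <;> simp at h) (hrow0 _)
    · exact hone _ (hrow0 _) (hpred (Or.inr rfl) (Or.inr ⟨rfl, rfl⟩)) h10
    · exact hone _ h10 (hpred (Or.inr rfl) (Or.inr ⟨rfl, rfl⟩)) (hrow2 _)
  · exact hone (0, ⟨j - 1, by omega⟩) (hrow0 _)
      (hpred (Or.inl rfl) (Or.inl ⟨rfl, Nat.sub_add_cancel hj⟩)) (hrow0 j)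
end

section
/- Let k ≥ 1, t ≥ 2, and let D be the digraph obtained from the disjoint union of t directed stars S_{i₁},…,S_{i_t} with i_j ≥ k+2 for all j, by selecting one leaf from each star and adding arcs among these t selected leaves so that D is connected. Then γ(D) = t and γ_trk(D) = (k+1)·t = (k+1)·γ(D). -/
open Finset

theorem stars_sharpness
    {V : Type*} [Fintype V] [DecidableEq V] (Adj : V → V → Prop)
    (k t : ℕ) (hk : 1 ≤ k) (ht : 2 ≤ t)
    (φ : V → Fin t) (c : Fin t → V) (l : Fin t → V)
    (hc : ∀ j, φ (c j) = j) (hl : ∀ j, φ (l j) = j) (hlc : ∀ j, l j ≠ c j)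
    (hsize : ∀ j, k + 2 ≤ (Finset.univ.filter fun v => φ v = j).card)
    (hstar : ∀ u v : V, φ u = φ v → (Adj u v ↔ (u = c (φ v) ∧ v ≠ u)))
    (hcross : ∀ u v : V, φ u ≠ φ v → Adj u v → (u = l (φ u) ∧ v = l (φ v)))
    (hconn : (underlying Adj).Connected) :
    domNum Adj = t ∧ tkRainbow k Adj = (k + 1) * t := by
  have hkne : Nonempty (Fin k) := ⟨⟨0, hk⟩⟩
  -- centers have no in-neighbors
  have hcin : ∀ (j : Fin t) (u : V), ¬ Adj u (c j) := by
    intro j u h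
    by_cases hφ : φ u = φ (c j)
    · obtain ⟨he, hne⟩ := (hstar u (c j) hφ).mp h
      rw [hc] at he
      exact hne he.symm
    · obtain ⟨_, h2⟩ := hcross u (c j) hφ h
      rw [hc] at h2
      exact hlc j h2.symm
  have cinj : Function.Injective c := fun a b hab => by
    rw [← hc a, ← hc b, hab]
  have linj : Function.Injective l := fun a b hab => by
    rw [← hl a, ← hl b, hab]
  -- centers dominate
  have hdomset : IsDomSet Adj (Finset.univ.image c) := by
    intro v hv
    refine ⟨c (φ v), Finset.mem_image.2 ⟨φ v, Finset.mem_univ _, rfl⟩, ?_⟩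
    refine (hstar _ _ (hc (φ v))).mpr ⟨rfl, fun h => hv ?_⟩
    rw [h]; exact Finset.mem_image.2 ⟨φ v, Finset.mem_univ _, rfl⟩
  have hcardc : (Finset.univ.image c).card = t := by
    rw [Finset.card_image_of_injective _ cinj, Finset.card_univ, Fintype.card_fin]
  have hdomnum : domNum Adj = t := by
    refine le_antisymm (Nat.sInf_le ⟨_, hdomset, hcardc⟩) (le_csInf ⟨t, _, hdomset, hcardc⟩ ?_)
    rintro m ⟨S, hS, rfl⟩
    have hsub : Finset.univ.image c ⊆ S := by
      intro x hx
      obtain ⟨j, _, rfl⟩ := Finset.mem_image.mp hx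
      by_contra hxS
      obtain ⟨u, _, hadj⟩ := hS _ hxS
      exact hcin j u hadj
    calc t = (Finset.univ.image c).card := hcardc.symm
      _ ≤ S.card := Finset.card_le_card hsub
  refine ⟨hdomnum, ?_⟩
  -- the total k-rainbow domination number
  classical
  set g : V → Finset (Fin k) := fun v =>
    if v = c (φ v) then Finset.univ else if v = l (φ v) then {(⟨0, hk⟩ : Fin k)} else ∅ with hg
  have hgc : ∀ j, g (c j) = Finset.univ := by
    intro j; simp [hg, hc]
  have hgl : ∀ j, g (l j) = {(⟨0, hk⟩ : Fin k)} := by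
    intro j; simp [hg, hl, hlc j]
  have hgTkRDF : IsTkRDF k Adj g := by
    constructor
    · intro v hv col
      have hvc : v ≠ c (φ v) := by
        intro h; rw [hg] at hv; simp only [if_pos h] at hv
        exact (Finset.univ_nonempty.ne_empty) hv
      refine ⟨c (φ v), (hstar _ _ (hc (φ v))).mpr ⟨rfl, hvc⟩, ?_⟩
      rw [hgc]; exact Finset.mem_univ _
    · intro v hv
      by_cases hvc : v = c (φ v)
      · refine ⟨l (φ v), fun h => hlc (φ v) (h.trans hvc), ?_, Or.inr ?_⟩
        · rw [hgl]; simp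
        · have hφ : φ v = φ (l (φ v)) := (hl (φ v)).symm
          refine (hstar _ _ hφ).mpr ⟨by rw [hl]; exact hvc, fun h => hlc (φ v) (h.trans hvc)⟩
      · by_cases hvl : v = l (φ v)
        · refine ⟨c (φ v), fun h => hvc h.symm, ?_, Or.inl ?_⟩
          · rw [hgc]; exact Finset.univ_nonempty.ne_empty
          · exact (hstar _ _ (hc (φ v))).mpr ⟨rfl, hvc⟩
        · exact absurd (by rw [hg]; simp [hvc, hvl]) hv
  -- weight of g
  have hdisj : Disjoint (Finset.univ.image c) (Finset.univ.image l) := by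
    rw [Finset.disjoint_left]
    rintro x hx hy
    obtain ⟨j, _, rfl⟩ := Finset.mem_image.mp hx
    obtain ⟨j', _, he⟩ := Finset.mem_image.mp hy
    have : j' = j := by rw [← hl j', ← hc j, he]
    rw [this] at he
    exact hlc j he
  have hgsum : ∑ v, (g v).card = (k + 1) * t := by
    have h1 : ∑ v ∈ (Finset.univ.image c ∪ Finset.univ.image l), (g v).card
        = ∑ v, (g v).card := by
      refine Finset.sum_subset (Finset.subset_univ _) ?_
      intro x _ hx
      rw [Finset.mem_union] at hx
      push_neg at hx
      have h1 : x ≠ c (φ x) := fun h => hx.1 (by rw [h]; exact Finset.mem_image.2 ⟨_, Finset.mem_univ _, rfl⟩)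
      have h2 : x ≠ l (φ x) := fun h => hx.2 (by rw [h]; exact Finset.mem_image.2 ⟨_, Finset.mem_univ _, rfl⟩)
      rw [hg]; simp [h1, h2]
    rw [← h1, Finset.sum_union hdisj,
      Finset.sum_image (fun a _ b _ h => cinj h),
      Finset.sum_image (fun a _ b _ h => linj h)]
    simp only [hgc, hgl, Finset.card_univ, Fintype.card_fin, Finset.card_singleton]
    rw [Finset.sum_const, Finset.sum_const, Finset.card_univ, Fintype.card_fin]
    ring
  -- per-star lower bound
  have star_lb : ∀ (f : V → Finset (Fin k)), IsTkRDF k Adj f → ∀ j : Fin t,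
      k + 1 ≤ ∑ v ∈ Finset.univ.filter (fun v => φ v = j), (f v).card := by
    rintro f ⟨hrdf, htot⟩ j
    set Sj := Finset.univ.filter (fun v => φ v = j) with hSj
    set T := Finset.univ.filter (fun v => φ v = j ∧ v ≠ c j ∧ v ≠ l j) with hT
    have hTsub : T ⊆ Sj := by
      intro x hx
      rw [hT, Finset.mem_filter] at hx
      rw [hSj, Finset.mem_filter]
      exact ⟨Finset.mem_univ _, hx.2.1⟩
    have hTcard : k ≤ T.card := by
      have hsub2 : Sj ⊆ insert (c j) (insert (l j) T) := by
        intro x hx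
        rw [hSj, Finset.mem_filter] at hx
        by_cases h1 : x = c j
        · exact Finset.mem_insert.2 (Or.inl h1)
        by_cases h2 : x = l j
        · exact Finset.mem_insert.2 (Or.inr (Finset.mem_insert.2 (Or.inl h2)))
        · refine Finset.mem_insert.2 (Or.inr (Finset.mem_insert.2 (Or.inr ?_)))
          rw [hT, Finset.mem_filter]
          exact ⟨Finset.mem_univ _, hx.2, h1, h2⟩
      have := (hsize j).trans (Finset.card_le_card hsub2)
      have h3 := Finset.card_insert_le (c j) (insert (l j) T)
      have h4 := Finset.card_insert_le (l j) T
      omega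
    have hnotl : ∀ v ∈ T, v ≠ l (φ v) := by
      intro v hv
      rw [hT, Finset.mem_filter] at hv
      rw [hv.2.1]; exact hv.2.2.2
    by_cases hA : ∃ v ∈ T, f v = ∅
    · obtain ⟨v, hvT, hv0⟩ := hA
      have hφv : φ v = j := ((Finset.mem_filter.mp hvT).2).1
      have hfc : f (c j) = Finset.univ := by
        refine Finset.eq_univ_iff_forall.mpr fun col => ?_
        obtain ⟨u, hadj, hcol⟩ := hrdf v hv0 col
        have hu : u = c j := by
          by_cases hφu : φ u = φ v
          · rw [((hstar u v hφu).mp hadj).1, hφv]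
          · exact absurd ((hcross u v hφu hadj).2) (hnotl v hvT)
        rwa [hu] at hcol
      obtain ⟨u, hune, hfu, hadj⟩ := htot (c j) (by rw [hfc]; exact Finset.univ_nonempty.ne_empty)
      have hφu : φ u = j := by
        rcases hadj with h | h
        · exact absurd h (hcin j u)
        · by_cases hp : φ (c j) = φ u
          · rw [← hp, hc]
          · have h2 := (hcross (c j) u hp h).1
            rw [hc] at h2
            exact absurd h2.symm (hlc j)
      have hpair : ({c j, u} : Finset V) ⊆ Sj := by
        intro x hx
        rw [hSj, Finset.mem_filter]
        rcases Finset.mem_insert.mp hx with h | h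
        · exact ⟨Finset.mem_univ _, by rw [h, hc]⟩
        · rw [Finset.mem_singleton] at h
          exact ⟨Finset.mem_univ _, by rw [h, hφu]⟩
      have hfucard : 1 ≤ (f u).card := Finset.card_pos.mpr (Finset.nonempty_of_ne_empty hfu)
      calc k + 1 ≤ (f (c j)).card + (f u).card := by
            rw [hfc, Finset.card_univ, Fintype.card_fin]; omega
        _ = ∑ v ∈ ({c j, u} : Finset V), (f v).card := by rw [Finset.sum_pair hune.symm]
        _ ≤ ∑ v ∈ Sj, (f v).card :=
            Finset.sum_le_sum_of_subset hpair
    · push_neg at hA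
      obtain ⟨v₀, hv₀⟩ := Finset.card_pos.mp (lt_of_lt_of_le hk hTcard)
      obtain ⟨hφv, hvc, hvl⟩ := (Finset.mem_filter.mp hv₀).2
      obtain ⟨u, hune, hfu, hadj⟩ := htot v₀ (hA v₀ hv₀).ne_empty
      have hu : u = c j := by
        rcases hadj with h | h
        · by_cases hφu : φ u = φ v₀
          · rw [((hstar u v₀ hφu).mp h).1, hφv]
          · exact absurd ((hcross u v₀ hφu h).2) (hnotl v₀ hv₀)
        · by_cases hφu : φ v₀ = φ u
          · have := ((hstar v₀ u hφu).mp h).1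
            rw [← hφu, hφv] at this
            exact absurd this hvc
          · exact absurd ((hcross v₀ u hφu h).1) (hnotl v₀ hv₀)
      have hfc : 1 ≤ (f (c j)).card :=
        Finset.card_pos.mpr (Finset.nonempty_of_ne_empty (hu ▸ hfu))
      have hcnotT : c j ∉ T := by
        rw [hT, Finset.mem_filter]
        rintro ⟨_, _, h, _⟩
        exact h rfl
      have hTsum : T.card ≤ ∑ v ∈ T, (f v).card := by
        calc T.card = ∑ _v ∈ T, 1 := by rw [Finset.sum_const, smul_eq_mul, mul_one]
          _ ≤ ∑ v ∈ T, (f v).card := Finset.sum_le_sum fun v hv =>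
              Finset.card_pos.mpr (Finset.nonempty_of_ne_empty (hA v hv).ne_empty)
      have hins : insert (c j) T ⊆ Sj := by
        intro x hx
        rcases Finset.mem_insert.mp hx with h | h
        · rw [hSj, Finset.mem_filter]; exact ⟨Finset.mem_univ _, by rw [h, hc]⟩
        · exact hTsub h
      calc k + 1 ≤ (f (c j)).card + ∑ v ∈ T, (f v).card := by omega
        _ = ∑ v ∈ insert (c j) T, (f v).card := by rw [Finset.sum_insert hcnotT]
        _ ≤ ∑ v ∈ Sj, (f v).card := Finset.sum_le_sum_of_subset hins
  -- conclude
  refine le_antisymm (Nat.sInf_le ⟨g, hgTkRDF, hgsum⟩) (le_csInf ⟨_, g, hgTkRDF, hgsum⟩ ?_)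
  rintro m ⟨f, hf, rfl⟩
  have hfib : ∑ j : Fin t, ∑ v ∈ Finset.univ.filter (fun v => φ v = j), (f v).card
      = ∑ v, (f v).card := Finset.sum_fiberwise _ _ _
  calc (k + 1) * t = ∑ _j : Fin t, (k + 1) := by
        rw [Finset.sum_const, Finset.card_univ, Fintype.card_fin, smul_eq_mul, mul_comm]
    _ ≤ ∑ j : Fin t, ∑ v ∈ Finset.univ.filter (fun v => φ v = j), (f v).card :=
        Finset.sum_le_sum fun j _ => star_lb f hf j
    _ = ∑ v, (f v).card := hfib
end

section
/- Let k ≥ 1 and m ≥ 1, and let D be the digraph with vertex set {x₁,…,x_k, y₁,…,y_m} and arcs (x_i, y_j) for all 1 ≤ i ≤ k and 1 ≤ j ≤ m. Then γ_rk(D) = k and γ_trk(D) = k + 1, so γ_trk(D) = 2·γ_rk(D) − k + 1. -/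
open Finset

theorem bipartite_sharpness (k m : ℕ) (hk : 1 ≤ k) (hm : 1 ≤ m) :
    krdNum k (fun u v : Fin k ⊕ Fin m => u.isLeft ∧ v.isRight) = k ∧
    tkRainbow k (fun u v : Fin k ⊕ Fin m => u.isLeft ∧ v.isRight) = k + 1 := by
  have c0 : Fin k := ⟨0, hk⟩
  have j0 : Fin m := ⟨0, hm⟩
  set A : Fin k ⊕ Fin m → Fin k ⊕ Fin m → Prop :=
    fun u v => u.isLeft ∧ v.isRight with hA
  have hleft : ∀ (f : Fin k ⊕ Fin m → Finset (Fin k)), IsKRDF k A f →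
      ∀ i : Fin k, f (Sum.inl i) ≠ ∅ := by
    intro f hf i h
    obtain ⟨u, hu, -⟩ := hf (Sum.inl i) h c0
    simp [hA] at hu
  have hlow : ∀ (f : Fin k ⊕ Fin m → Finset (Fin k)), IsKRDF k A f →
      k ≤ ∑ v, (f v).card := by
    intro f hf
    have h1 : ∀ i : Fin k, 1 ≤ (f (Sum.inl i)).card := fun i =>
      Finset.card_pos.2 (Finset.nonempty_iff_ne_empty.2 (hleft f hf i))
    calc k = ∑ _i : Fin k, 1 := by simp
      _ ≤ ∑ i : Fin k, (f (Sum.inl i)).card := Finset.sum_le_sum fun i _ => h1 i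
      _ ≤ _ := by
          rw [Fintype.sum_sum_type]
          exact Nat.le_add_right _ _
  have hwit1 : k ∈ {w | ∃ f : Fin k ⊕ Fin m → Finset (Fin k),
      IsKRDF k A f ∧ ∑ v, (f v).card = w} := by
    refine ⟨Sum.elim (fun i => {i}) (fun _ => ∅), ?_, ?_⟩
    · intro v hv c
      cases v with
      | inl i => simp at hv
      | inr j => exact ⟨Sum.inl c, by simp [hA], by simp⟩
    · rw [Fintype.sum_sum_type]; simp
  have g : Fin k ⊕ Fin m → Finset (Fin k) :=
    Sum.elim (fun i => {i}) (fun j => if j = j0 then {c0} else ∅)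
  have hwit2 : k + 1 ∈ {w | ∃ f : Fin k ⊕ Fin m → Finset (Fin k),
      IsTkRDF k A f ∧ ∑ v, (f v).card = w} := by
    refine ⟨Sum.elim (fun i => {i}) (fun j => if j = j0 then {c0} else ∅), ⟨?_, ?_⟩, ?_⟩
    · intro v hv c
      cases v with
      | inl i => simp at hv
      | inr j => exact ⟨Sum.inl c, by simp [hA], by simp⟩
    · intro v hv
      cases v with
      | inl i =>
        refine ⟨Sum.inr j0, by simp, by simp, Or.inr (by simp [hA])⟩
      | inr j =>
        refine ⟨Sum.inl c0, by simp, by simp, Or.inl (by simp [hA])⟩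
    · rw [Fintype.sum_sum_type]
      simp [apply_ite Finset.card]
  constructor
  · refine le_antisymm (Nat.sInf_le hwit1) ?_
    obtain ⟨f, hf, hsum⟩ := Nat.sInf_mem (⟨k, hwit1⟩ : Set.Nonempty _)
    unfold krdNum
    rw [← hsum]
    exact hlow f hf
  · refine le_antisymm (Nat.sInf_le hwit2) ?_
    obtain ⟨f, hf, hsum⟩ := Nat.sInf_mem (⟨k + 1, hwit2⟩ : Set.Nonempty _)
    unfold tkRainbow
    rw [← hsum]
    -- some right vertex is nonempty
    obtain ⟨u, hne, hune, hadj⟩ := hf.2 (Sum.inl c0) (hleft f hf.1 c0)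
    obtain ⟨j, rfl⟩ : ∃ j : Fin m, u = Sum.inr j := by
      cases u with
      | inl i => simp [hA] at hadj
      | inr j => exact ⟨j, rfl⟩
    have h2 : 1 ≤ ∑ j' : Fin m, (f (Sum.inr j')).card := by
      calc 1 ≤ (f (Sum.inr j)).card :=
            Finset.card_pos.2 (Finset.nonempty_iff_ne_empty.2 hune)
        _ ≤ _ := Finset.single_le_sum (f := fun j' => (f (Sum.inr j')).card)
            (fun _ _ => Nat.zero_le _) (Finset.mem_univ j)
    have h1 : k ≤ ∑ i : Fin k, (f (Sum.inl i)).card := by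
      calc k = ∑ _i : Fin k, 1 := by simp
        _ ≤ _ := Finset.sum_le_sum fun i _ =>
            Finset.card_pos.2 (Finset.nonempty_iff_ne_empty.2 (hleft f hf.1 i))
    have hsplit : ∑ v : Fin k ⊕ Fin m, (f v).card =
        (∑ i : Fin k, (f (Sum.inl i)).card) + ∑ j' : Fin m, (f (Sum.inr j')).card :=
      Fintype.sum_sum_type _
    rw [hsplit]
    exact Nat.add_le_add h1 h2
end
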